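/- Let T : V → g be a relative Rota–Baxter operator of weight 0 for a representation ρ : g → End(V) and let (τ,σ) be a reflection on (V →T g, ρ). Define σ̃ : g × Dual(V) → g × Dual(V) by σ̃(x,α) := (σx, −α∘τ). Then: (a) σ̃ is a Lie algebra automorphism of g ⋉_{ρ*} Dual(V); (b) (σ̃ − id) ∘ R ∘ (σ̃* − id) = 0, where R : V × Dual(g) → g × Dual(V) is R(v,ξ) := (Tv, −ξ∘T) and σ̃*(v,ξ) := (−τv, ξ∘σ). That is, σ̃ is a solution of the classical reflection equation for the triangular Lie bialgebra (g ⋉_{ρ*} V*, r_T = T − T^{21}). -/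

import Mathlib

variable {K : Type*} [Field K] {g : Type*} [LieRing g] [LieAlgebra K g]
  {V : Type*} [AddCommGroup V] [Module K V]

attribute [instance] LieRing.ofAssociativeRing

/-- `ρ*(x)α := −α ∘ ρ(x)` on `Dual V`. -/
def rhoStar (ρ : g →ₗ⁅K⁆ Module.End K V) (x : g) (α : Module.Dual K V) :
    Module.Dual K V :=
  -(α ∘ₗ (ρ x : V →ₗ[K] V))

/-- The semidirect bracket on `g × Dual V`:
`⁅(x,α),(y,β)⁆ = (⁅x,y⁆, ρ*(x)β − ρ*(y)α)`. -/
def brD (ρ : g →ₗ⁅K⁆ Module.End K V) (a b : g × Module.Dual K V) :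
    g × Module.Dual K V :=
  (⁅a.1, b.1⁆, rhoStar ρ a.1 b.2 - rhoStar ρ b.1 a.2)

/-- `R(v,ξ) := (Tv, −ξ∘T)`. -/
def rPlusT (T : V →ₗ[K] g) (p : V × Module.Dual K g) : g × Module.Dual K V :=
  (T p.1, -(p.2 ∘ₗ T))

/-- `σ̃(x,α) := (σx, −α∘τ)`. -/
def sigmaTilde (σ : g ≃ₗ[K] g) (τ : V ≃ₗ[K] V) (a : g × Module.Dual K V) :
    g × Module.Dual K V :=
  (σ a.1, -(a.2 ∘ₗ (τ : V →ₗ[K] V)))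

/-- For a relative Rota–Baxter operator `T : V → g` of weight 0 and a
reflection `(τ,σ)` on `(V →T g, ρ)`, the map `σ̃(x,α) = (σx, −α∘τ)` is (a) a Lie algebra
automorphism of `g ⋉_{ρ*} Dual V`, and (b) satisfies `(σ̃−id) ∘ R ∘ (σ̃*−id) = 0` with
`R(v,ξ) = (Tv, −ξ∘T)` and `σ̃*(v,ξ) = (−τv, ξ∘σ)`; i.e. `σ̃` solves the classical
reflection equation for the triangular Lie bialgebra `(g ⋉_{ρ*} V*, r_T = T − T^{21})`. -/
theorem stmt13 (ρ : g →ₗ⁅K⁆ Module.End K V) (T : V →ₗ[K] g)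
    (hT : ∀ u v : V, T (ρ (T u) v - ρ (T v) u) = ⁅T u, T v⁆)
    (τ : V ≃ₗ[K] V) (σ : g ≃ₗ[K] g)
    (hσbr : ∀ x y : g, σ ⁅x, y⁆ = ⁅σ x, σ y⁆)
    (hrefl1 : ∀ (x : g) (v : V), τ (ρ (σ x) v) = ρ x (τ v))
    (hrefl2 : ∀ v : V, σ (T (τ v)) - T v + σ (T v) - T (τ v) = 0) :
    -- (a) `σ̃` is a Lie algebra automorphism of `g ⋉_{ρ*} Dual V`
    Function.Bijective (sigmaTilde (K := K) σ τ) ∧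
    (∀ a b : g × Module.Dual K V,
      sigmaTilde σ τ (brD ρ a b) = brD ρ (sigmaTilde σ τ a) (sigmaTilde σ τ b)) ∧
    -- (b) `(σ̃ − id) ∘ R ∘ (σ̃* − id) = 0`
    (∀ (v : V) (ξ : Module.Dual K g),
      sigmaTilde σ τ (rPlusT T (-(τ v) - v, ξ ∘ₗ (σ : g →ₗ[K] g) - ξ)) -
        rPlusT T (-(τ v) - v, ξ ∘ₗ (σ : g →ₗ[K] g) - ξ) = 0) := by
  refine ⟨?_, ?_, ?_⟩
  · constructor
    · intro a b h
      simp only [sigmaTilde, Prod.mk.injEq] at h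
      have h1 : a.1 = b.1 := σ.injective h.1
      have h2 : a.2 = b.2 := by
        ext v
        have := congrArg (fun f : Module.Dual K V => f (τ.symm v)) h.2
        simpa using this
      exact Prod.ext h1 h2
    · intro b
      refine ⟨(σ.symm b.1, -(b.2 ∘ₗ (τ.symm : V →ₗ[K] V))), ?_⟩
      simp only [sigmaTilde]
      refine Prod.ext (by simp) ?_
      ext v; simp
  · intro a b
    simp only [sigmaTilde, brD, rhoStar, hσbr]
    refine Prod.ext rfl ?_
    ext v
    simp only [LinearMap.neg_apply, LinearMap.comp_apply, LinearMap.sub_apply]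
    have h1 := hrefl1 a.1 v
    have h2 := hrefl1 b.1 v
    have e1 : ρ a.1 (τ v) = τ (ρ (σ a.1) v) := (hrefl1 a.1 v).symm
    have e2 : ρ b.1 (τ v) = τ (ρ (σ b.1) v) := (hrefl1 b.1 v).symm
    simp [e1, e2]
    ring
  · intro v ξ
    simp only [sigmaTilde, rPlusT]
    refine Prod.ext ?_ ?_
    · show σ (T (-(τ v) - v)) - T (-(τ v) - v) = 0
      have key : σ (T (τ v)) + σ (T v) = T v + T (τ v) := by
        have h := hrefl2 v
        have : σ (T (τ v)) + σ (T v) - (T v + T (τ v)) = 0 := by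
          rw [← h]; abel
        linear_combination (norm := abel) this
      have hT' : T (-(τ v) - v) = -(T (τ v)) - T v := by
        rw [map_sub, map_neg]
      rw [hT', map_sub, map_neg]
      calc -(σ (T (τ v))) - σ (T v) - (-(T (τ v)) - T v)
          = (T v + T (τ v)) - (σ (T (τ v)) + σ (T v)) := by abel
        _ = 0 := by rw [key, sub_self]
    · show -(-(((ξ ∘ₗ (σ : g →ₗ[K] g) - ξ)) ∘ₗ T) ∘ₗ (τ : V →ₗ[K] V)) -
        -((ξ ∘ₗ (σ : g →ₗ[K] g) - ξ) ∘ₗ T) = 0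
      ext u
      simp only [LinearMap.sub_apply, LinearMap.neg_apply, LinearMap.comp_apply,
        LinearMap.zero_apply, LinearMap.coe_coe]
      have h3 : ξ (σ (T (τ u)) - T u + σ (T u) - T (τ u)) = 0 := by
        rw [hrefl2 u]; simp
      simp only [map_sub, map_add] at h3
      linear_combination h3
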